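/- Extension Lemma: (i) every function f : B2^n → DM4 that is positive (i.e., monotone with respect to the componentwise truth order on B2^n) extends to a function in the clone BiLat; (ii) every positive f : B2^n → K3 extends to a function in ⟨DLat, n⟩; (iii) every positive f : B2^n → P3 extends to a function in ⟨DLat, b⟩; (iv) every positive f : B2^n → B2 extends to a function in DLat. -/

import Mathlib

set_option autoImplicit false

/-- The four truth values of the Belnap–Dunn logic. -/
inductive DM4 : Type
  | t
  | f
  | n
  | b
deriving DecidableEq

namespace DM4

/-- De Morgan negation. -/
def neg : DM4 → DM4
  | t => f
  | f => t
  | n => n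
  | b => b

/-- Conflation. -/
def conf : DM4 → DM4
  | t => t
  | f => f
  | n => b
  | b => n

/-- Meet in the truth order. -/
def meet : DM4 → DM4 → DM4
  | f, _ => f
  | _, f => f
  | t, y => y
  | x, t => x
  | n, n => n
  | b, b => b
  | n, b => f
  | b, n => f

/-- Join in the truth order. -/
def join : DM4 → DM4 → DM4
  | t, _ => t
  | _, t => t
  | f, y => y
  | x, f => x
  | n, n => n
  | b, b => b
  | n, b => t
  | b, n => t

/-- Meet in the information order (⊗). -/
def imeet : DM4 → DM4 → DM4
  | n, _ => n
  | _, n => n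
  | b, y => y
  | x, b => x
  | t, t => t
  | f, f => f
  | t, f => n
  | f, t => n

/-- Join in the information order (⊕). -/
def ijoin : DM4 → DM4 → DM4
  | b, _ => b
  | _, b => b
  | n, y => y
  | x, n => x
  | t, t => t
  | f, f => f
  | t, f => b
  | f, t => b

/-- The truth order: least element `f`, greatest element `t`, with `n`, `b` incomparable. -/
def tle (x y : DM4) : Prop := x = y ∨ x = f ∨ y = t

/-- The information order: least element `n`, greatest element `b`, with `t`, `f` incomparable. -/
def ile (x y : DM4) : Prop := x = y ∨ x = n ∨ y = b

/-- □: maps t to t and everything else to f. -/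
def box : DM4 → DM4
  | t => t
  | _ => f

/-- ◇: maps f to f and everything else to t. -/
def diamond : DM4 → DM4
  | f => f
  | _ => t

/-- Δ: maps t, b to t and n, f to f. -/
def delta : DM4 → DM4
  | t => t
  | b => t
  | _ => f

/-- ∇: maps t, n to t and b, f to f. -/
def nabla : DM4 → DM4
  | t => t
  | n => t
  | _ => f

/-- id_{b↦n}: maps b to n and fixes t, f, n. -/
def idbn : DM4 → DM4
  | b => n
  | x => x

/-- id_{n↦b}: maps n to b and fixes t, f, b. -/
def idnb : DM4 → DM4
  | n => b
  | x => x

/-- id_{n↦t}: maps n to t and fixes t, f, b. -/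
def idnt : DM4 → DM4
  | n => t
  | x => x

/-- id_{b↦t}: maps b to t and fixes t, f, n. -/
def idbt : DM4 → DM4
  | b => t
  | x => x

/-- t_{n↦n}: maps n to n and everything else to t. -/
def tnn : DM4 → DM4
  | n => n
  | _ => t

/-- t_{b↦b}: maps b to b and everything else to t. -/
def tbb : DM4 → DM4
  | b => b
  | _ => t

/-- The binary function pbp²₁. -/
def pbp1 : DM4 → DM4 → DM4
  | t, t => t | t, f => f | t, n => f | t, b => b
  | f, t => t | f, f => f | f, n => f | f, b => b
  | n, t => t | n, f => f | n, n => n | n, b => b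
  | b, t => b | b, f => f | b, n => f | b, b => b

/-- The binary function pbp²₂. -/
def pbp2 : DM4 → DM4 → DM4
  | t, t => t | t, f => f | t, n => n | t, b => f
  | f, t => t | f, f => f | f, n => n | f, b => f
  | n, t => n | n, f => f | n, n => n | n, b => f
  | b, t => t | b, f => f | b, n => n | b, b => b

/-- The binary function mnh²₁. -/
def mnh1 : DM4 → DM4 → DM4
  | t, t => f | t, f => f | t, n => n | t, b => b
  | f, t => f | f, f => f | f, n => n | f, b => b
  | n, t => f | n, f => f | n, n => n | n, b => f
  | b, t => f | b, f => f | b, n => n | b, b => b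

/-- The binary function mnh²₂. -/
def mnh2 : DM4 → DM4 → DM4
  | t, t => f | t, f => f | t, n => n | t, b => b
  | f, t => f | f, f => f | f, n => n | f, b => b
  | n, t => f | n, f => f | n, n => n | n, b => b
  | b, t => f | b, f => f | b, n => f | b, b => b

/-- The binary function mhnp². -/
def mhnp2 : DM4 → DM4 → DM4
  | t, _ => t
  | f, _ => t
  | n, b => f
  | n, _ => n
  | b, n => f
  | b, _ => b

/-- The binary function mnp²₁. -/
def mnp1 : DM4 → DM4 → DM4
  | t, b => b
  | t, _ => t
  | f, b => b
  | f, _ => t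
  | n, b => f
  | n, _ => n
  | b, n => f
  | b, _ => b

/-- The binary function mnp²₂. -/
def mnp2 : DM4 → DM4 → DM4
  | t, _ => t
  | f, _ => t
  | n, _ => n
  | b, n => f
  | b, _ => b

/-- The binary function mnp²₃. -/
def mnp3 : DM4 → DM4 → DM4
  | t, n => n
  | t, _ => t
  | f, n => n
  | f, _ => t
  | n, b => f
  | n, _ => n
  | b, n => f
  | b, _ => b

/-- The binary function mnp²₄. -/
def mnp4 : DM4 → DM4 → DM4
  | t, _ => t
  | f, _ => t
  | n, b => f
  | n, _ => n
  | b, _ => b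

/-- The ternary function mhnp³. -/
def mhnp3 : DM4 → DM4 → DM4 → DM4
  | _, t, _ => f
  | _, f, _ => f
  | t, n, _ => n
  | f, n, _ => f
  | b, n, _ => f
  | n, n, b => f
  | n, n, _ => n
  | t, b, _ => b
  | f, b, _ => f
  | n, b, _ => f
  | b, b, n => f
  | b, b, _ => b

/-- The set of designated values. -/
def Des : Set DM4 := {t, b}

/-- Designatedness as a Boolean predicate. -/
def des : DM4 → Bool
  | t => true
  | b => true
  | _ => false

/-- The protoimplication →_{t-max}. -/
def tmax (x y : DM4) : DM4 :=
  match des x, des y with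
  | true, false => n
  | _, _ => t

/-- The protoimplication →_{i-max}. -/
def imax (x y : DM4) : DM4 :=
  match des x, des y with
  | true, false => f
  | _, _ => b

/-- The protoimplication ↔_{t-min}. -/
def tmin (x y : DM4) : DM4 := if x = y then b else f

/-- The protoimplication ↔_{i-min}. -/
def imin (x y : DM4) : DM4 := if x = y then t else n

/-- A binary operation is a protoimplication if it satisfies Reflexivity and Modus Ponens
with respect to the designated set {t, b}. -/
def IsProtoimplication (r : DM4 → DM4 → DM4) : Prop :=
  (∀ a : DM4, r a a ∈ Des) ∧ ∀ a c : DM4, a ∈ Des → r a c ∈ Des → c ∈ Des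

/-- `DMFun k` is the type of De Morgan functions of arity `k + 1` (arities are positive). -/
abbrev DMFun (k : ℕ) : Type := (Fin (k + 1) → DM4) → DM4

/-- Membership in the clone generated by the family of operations `S`
(`S k` is the set of generators of arity `k + 1`). -/
inductive InClone (S : ∀ k : ℕ, Set (DMFun k)) : ∀ k : ℕ, DMFun k → Prop
  | base {k : ℕ} {g : DMFun k} : g ∈ S k → InClone S k g
  | proj {k : ℕ} (i : Fin (k + 1)) : InClone S k (fun x => x i)
  | comp {k m : ℕ} {g : DMFun m} {h : Fin (m + 1) → DMFun k} :
      InClone S m g → (∀ i, InClone S k (h i)) →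
      InClone S k (fun x => g (fun i => h i x))

/-- A family of sets of De Morgan functions is a clone if it contains all projections
and is closed under composition. -/
structure IsClone (C : ∀ k : ℕ, Set (DMFun k)) : Prop where
  proj : ∀ (k : ℕ) (i : Fin (k + 1)), (fun x => x i) ∈ C k
  comp : ∀ (k m : ℕ) (g : DMFun m) (h : Fin (m + 1) → DMFun k),
      g ∈ C m → (∀ i, h i ∈ C k) → (fun x => g (fun i => h i x)) ∈ C k

/-- The generating family consisting of a single unary operation. -/
def op1 (g : DM4 → DM4) : ∀ k : ℕ, Set (DMFun k)
  | 0 => {fun x => g (x 0)}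
  | _ + 1 => ∅

/-- The generating family consisting of a single binary operation. -/
def op2 (g : DM4 → DM4 → DM4) : ∀ k : ℕ, Set (DMFun k)
  | 1 => {fun x => g (x 0) (x 1)}
  | _ => ∅

/-- The generating family consisting of a single ternary operation. -/
def op3 (g : DM4 → DM4 → DM4 → DM4) : ∀ k : ℕ, Set (DMFun k)
  | 2 => {fun x => g (x 0) (x 1) (x 2)}
  | _ => ∅

/-- Union of two families of operations. -/
def funion (S T : ∀ k : ℕ, Set (DMFun k)) : ∀ k : ℕ, Set (DMFun k) := fun k => S k ∪ T k

infixr:65 " ⊹ " => funion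

/-- The generators of DLat: ∧, ∨, t, f (constants as unary constant functions). -/
def DLatGen : ∀ k : ℕ, Set (DMFun k) :=
  op2 meet ⊹ op2 join ⊹ op1 (fun _ => t) ⊹ op1 (fun _ => f)

/-- The generators of DMA: ∧, ∨, t, f, −. -/
def DMAGen : ∀ k : ℕ, Set (DMFun k) := DLatGen ⊹ op1 neg

/-- The generators of BiLat: ∧, ∨, t, f, ⊗, ⊕, n, b. -/
def BiLatGen : ∀ k : ℕ, Set (DMFun k) :=
  DLatGen ⊹ op2 imeet ⊹ op2 ijoin ⊹ op1 (fun _ => n) ⊹ op1 (fun _ => b)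

/-- A De Morgan function is harmonious if it commutes with conflation. -/
def Harmonious {k : ℕ} (g : DMFun k) : Prop :=
  ∀ x : Fin (k + 1) → DM4, g (fun i => conf (x i)) = conf (g x)

/-- A De Morgan function is positive if it is monotone in the componentwise truth order. -/
def Positive {k : ℕ} (g : DMFun k) : Prop :=
  ∀ x y : Fin (k + 1) → DM4, (∀ i, tle (x i) (y i)) → tle (g x) (g y)

/-- A De Morgan function is persistent if it is monotone in the componentwise
information order. -/
def Persistent {k : ℕ} (g : DMFun k) : Prop :=
  ∀ x y : Fin (k + 1) → DM4, (∀ i, ile (x i) (y i)) → ile (g x) (g y)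

/-- A De Morgan function preserves a subset X of DM4 if it maps tuples from X into X. -/
def Preserves {k : ℕ} (g : DMFun k) (X : Set DM4) : Prop :=
  ∀ x : Fin (k + 1) → DM4, (∀ i, x i ∈ X) → g x ∈ X

def B2 : Set DM4 := {t, f}
def K3 : Set DM4 := {t, n, f}
def P3 : Set DM4 := {t, b, f}

/-- A unary operation as a De Morgan function. -/
def toF1 (g : DM4 → DM4) : DMFun 0 := fun x => g (x 0)

/-- A binary operation as a De Morgan function. -/
def toF2 (g : DM4 → DM4 → DM4) : DMFun 1 := fun x => g (x 0) (x 1)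

/-- A ternary operation as a De Morgan function. -/
def toF3 (g : DM4 → DM4 → DM4 → DM4) : DMFun 2 := fun x => g (x 0) (x 1) (x 2)

/-- The clone generated by a family of operations, as a family of sets. -/
def CloneOf (S : ∀ k : ℕ, Set (DMFun k)) : ∀ k : ℕ, Set (DMFun k) :=
  fun k => {g | InClone S k g}

/-- Inclusion of families of operations. -/
def CloneLE (C D : ∀ k : ℕ, Set (DMFun k)) : Prop := ∀ k : ℕ, C k ⊆ D k



/-!
Shannon expansion along a variable `x` with both cofactors positive: since `F[x := f] ≤ F[x := t]`
for a positive `F`, absorption gives `F = (x ∧ F[x := t]) ∨ F[x := f]` on Boolean arguments.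
Iterating over all variables writes `F` as a lattice term in the variables and its values,
so only `∧`, `∨` and the constants occurring among the values of `F` are needed.
-/

def B2Positive {m : ℕ} (F : (Fin m → {a : DM4 // a ∈ B2}) → DM4) : Prop :=
  ∀ x y, (∀ i, tle (x i).1 (y i).1) → tle (F x) (F y)

def Extends {k : ℕ} (g : DMFun k) (F : (Fin (k + 1) → {a : DM4 // a ∈ B2}) → DM4) : Prop :=
  ∀ x, g (fun i => (x i).1) = F x

theorem join_meet_t_of_tle {a c : DM4} (h : tle c a) : join (meet t a) c = a := by
  cases a <;> cases c <;> first | rfl | (rcases h with h | h | h <;> cases h)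

theorem join_meet_f (a c : DM4) : join (meet f a) c = c := by
  cases a <;> cases c <;> rfl

namespace B2Positive

variable {m : ℕ} {F : (Fin (m + 1) → {a : DM4 // a ∈ B2}) → DM4}

theorem snoc (hF : B2Positive F) (v : {a : DM4 // a ∈ B2}) :
    B2Positive fun x => F (Fin.snoc x v) := by
  intro x y hxy
  apply hF
  intro i
  refine Fin.lastCases ?_ (fun j => ?_) i
  · simp only [Fin.snoc_last]
    exact Or.inl rfl
  · simpa only [Fin.snoc_castSucc] using hxy j

theorem snoc_f_tle_snoc_t (hF : B2Positive F) (x : Fin m → {a : DM4 // a ∈ B2}) :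
    tle (F (Fin.snoc x ⟨f, Or.inr rfl⟩)) (F (Fin.snoc x ⟨t, Or.inl rfl⟩)) := by
  apply hF
  intro i
  refine Fin.lastCases ?_ (fun j => ?_) i
  · simp only [Fin.snoc_last]
    exact Or.inr (Or.inl rfl)
  · simp only [Fin.snoc_castSucc]
    exact Or.inl rfl

end B2Positive

namespace InClone

variable {S : ∀ k : ℕ, Set (DMFun k)} {k : ℕ}

theorem const {c : DM4} (hc : InClone S 0 (toF1 fun _ => c)) : InClone S k fun _ => c :=
  .comp (h := fun _ => fun x => x 0) hc fun _ => .proj 0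

theorem binop {op : DM4 → DM4 → DM4} (hop : InClone S 1 (toF2 op)) {g₁ g₂ : DMFun k}
    (h₁ : InClone S k g₁) (h₂ : InClone S k g₂) : InClone S k fun x => op (g₁ x) (g₂ x) :=
  .comp (h := ![g₁, g₂]) hop fun i => by fin_cases i <;> assumption

end InClone

section Extension

variable {S : ∀ k : ℕ, Set (DMFun k)} (hS : ∀ k, DLatGen k ⊆ S k)
include hS

theorem inClone_meet : InClone S 1 (toF2 meet) := .base (hS 1 (Or.inl rfl))

theorem inClone_join : InClone S 1 (toF2 join) := .base (hS 1 (Or.inr (Or.inl rfl)))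

theorem inClone_const_of_mem_B2 {c : DM4} (hc : c ∈ B2) : InClone S 0 (toF1 fun _ => c) := by
  rcases hc with rfl | rfl
  · exact .base (hS 0 (Or.inr (Or.inr (Or.inl rfl))))
  · exact .base (hS 0 (Or.inr (Or.inr (Or.inr rfl))))

variable {C : Set DM4} (hC : ∀ c ∈ C, InClone S 0 (toF1 fun _ => c)) {k : ℕ}
include hC

/-- Reading `F` on the variables selected by `e` decouples the number `m` of variables, on which
the induction runs and which may reach `0`, from the arity `k + 1` of the clone member. -/
theorem exists_inClone_eq_comp {m : ℕ} (F : (Fin m → {a : DM4 // a ∈ B2}) → DM4)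
    (hFC : ∀ x, F x ∈ C) (hF : B2Positive F) (e : Fin m → Fin (k + 1)) :
    ∃ g : DMFun k, InClone S k g ∧ ∀ y, g (fun i => (y i).1) = F (y ∘ e) := by
  induction m with
  | zero =>
    refine ⟨fun _ => F Fin.elim0, (hC _ (hFC _)).const, fun y => ?_⟩
    rw [Subsingleton.elim (y ∘ e) Fin.elim0]
  | succ m ih =>
    obtain ⟨gt, hgt, hgt_eq⟩ :=
      ih (fun x => F (Fin.snoc x ⟨t, Or.inl rfl⟩)) (fun _ => hFC _) (hF.snoc _) (e ∘ Fin.castSucc)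
    obtain ⟨gf, hgf, hgf_eq⟩ :=
      ih (fun x => F (Fin.snoc x ⟨f, Or.inr rfl⟩)) (fun _ => hFC _) (hF.snoc _) (e ∘ Fin.castSucc)
    refine ⟨fun x => join (meet (x (e (Fin.last m))) (gt x)) (gf x),
      .binop (inClone_join hS) (.binop (inClone_meet hS) (.proj _) hgt) hgf, fun y => ?_⟩
    have hy : y ∘ e = Fin.snoc (Fin.init (y ∘ e)) (y (e (Fin.last m))) :=
      (Fin.snoc_init_self (y ∘ e)).symm
    simp only [hgt_eq, hgf_eq]
    rcases hlast : y (e (Fin.last m)) with ⟨_, rfl | rfl⟩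
    · rw [hy, hlast, join_meet_t_of_tle (hF.snoc_f_tle_snoc_t _)]
      rfl
    · rw [hy, hlast, join_meet_f]
      rfl

theorem exists_inClone_extends (F : (Fin (k + 1) → {a : DM4 // a ∈ B2}) → DM4)
    (hFC : ∀ x, F x ∈ C) (hF : B2Positive F) : ∃ g : DMFun k, InClone S k g ∧ Extends g F :=
  exists_inClone_eq_comp hS hC F hFC hF id

end Extension

/-- Extension Lemma. Every positive function from B2-tuples to DM4
(resp. into K3, P3, B2) extends to a function in BiLat (resp. ⟨DLat, n⟩, ⟨DLat, b⟩, DLat). -/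
theorem extension_lemma (k : ℕ) :
    (∀ F : (Fin (k + 1) → {a : DM4 // a ∈ B2}) → DM4,
      (∀ x y, (∀ i, tle (x i).1 (y i).1) → tle (F x) (F y)) →
      ∃ g : DMFun k, InClone BiLatGen k g ∧ ∀ x, g (fun i => (x i).1) = F x) ∧
    (∀ F : (Fin (k + 1) → {a : DM4 // a ∈ B2}) → DM4,
      (∀ x, F x ∈ K3) →
      (∀ x y, (∀ i, tle (x i).1 (y i).1) → tle (F x) (F y)) →
      ∃ g : DMFun k, InClone (DLatGen ⊹ op1 (fun _ => n)) k g ∧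
        ∀ x, g (fun i => (x i).1) = F x) ∧
    (∀ F : (Fin (k + 1) → {a : DM4 // a ∈ B2}) → DM4,
      (∀ x, F x ∈ P3) →
      (∀ x y, (∀ i, tle (x i).1 (y i).1) → tle (F x) (F y)) →
      ∃ g : DMFun k, InClone (DLatGen ⊹ op1 (fun _ => b)) k g ∧
        ∀ x, g (fun i => (x i).1) = F x) ∧
    (∀ F : (Fin (k + 1) → {a : DM4 // a ∈ B2}) → DM4,
      (∀ x, F x ∈ B2) →
      (∀ x y, (∀ i, tle (x i).1 (y i).1) → tle (F x) (F y)) →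
      ∃ g : DMFun k, InClone DLatGen k g ∧ ∀ x, g (fun i => (x i).1) = F x) := by
  have hBiLat : ∀ k, DLatGen k ⊆ BiLatGen k := fun _ => Set.subset_union_left
  have hK3 : ∀ k, DLatGen k ⊆ (DLatGen ⊹ op1 fun _ => n) k := fun _ => Set.subset_union_left
  have hP3 : ∀ k, DLatGen k ⊆ (DLatGen ⊹ op1 fun _ => b) k := fun _ => Set.subset_union_left
  refine ⟨fun F hF => exists_inClone_extends hBiLat (C := Set.univ) ?_ F (fun _ => trivial) hF,
    exists_inClone_extends hK3 ?_, exists_inClone_extends hP3 ?_,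
    exists_inClone_extends (fun _ => subset_rfl)
      fun _ => inClone_const_of_mem_B2 fun _ => subset_rfl⟩
  · rintro (_ | _ | _ | _) -
    · exact inClone_const_of_mem_B2 hBiLat (Or.inl rfl)
    · exact inClone_const_of_mem_B2 hBiLat (Or.inr rfl)
    · exact .base (Or.inr (Or.inr (Or.inr (Or.inl rfl))))
    · exact .base (Or.inr (Or.inr (Or.inr (Or.inr rfl))))
  · rintro c (rfl | rfl | rfl)
    · exact inClone_const_of_mem_B2 hK3 (Or.inl rfl)
    · exact .base (Or.inr rfl)
    · exact inClone_const_of_mem_B2 hK3 (Or.inr rfl)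
  · rintro c (rfl | rfl | rfl)
    · exact inClone_const_of_mem_B2 hP3 (Or.inl rfl)
    · exact .base (Or.inr rfl)
    · exact inClone_const_of_mem_B2 hP3 (Or.inr rfl)

end DM4
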